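/- arXiv:2506.15416 — 2 statements merged into one kernel-verified Lean document; each statement's English description precedes it below -/
import Mathlib

section
/- For a right spherical triangle with hypotenuse a (i.e. cos A = 0, so cos a = cos b * cos c), the three-square identity holds: ((cos b + cos c)/(1 + cos a)) * (sin a)^2 = ((cos c + cos a)/(1 + cos b)) * (sin b)^2 + ((cos a + cos b)/(1 + cos c)) * (sin c)^2. -/
/-!
Since `sin x ^ 2 = (1 - cos x) * (1 + cos x)`, each quotient collapses:
`t / (1 + cos x) * sin x ^ 2 = t * (1 - cos x)`. Writing `x, y, z` for the cosines of the sides,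
the identity becomes `(y + z) (1 - x) = (z + x) (1 - y) + (x + y) (1 - z)`, and on `x = y z`
both sides equal `(y + z) (1 - y z)`.
-/

open Real

lemma one_add_cos_pos_of_mem_Ioo {x : ℝ} (hx : x ∈ Set.Ioo 0 π) : 0 < 1 + cos x := by
  have h := cos_lt_cos_of_nonneg_of_le_pi hx.1.le le_rfl hx.2
  rw [cos_pi] at h
  linarith

lemma div_one_add_cos_mul_sin_sq (t : ℝ) {x : ℝ} (hx : 1 + cos x ≠ 0) :
    t / (1 + cos x) * sin x ^ 2 = t * (1 - cos x) := by
  rw [sin_sq, div_mul_eq_mul_div, div_eq_iff hx]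
  ring

theorem spherical_three_square_theorem_general
    (a b c : ℝ)
    (ha : a ∈ Set.Ioo 0 π) (hb : b ∈ Set.Ioo 0 π) (hc : c ∈ Set.Ioo 0 π)
    (hA : cos a = cos b * cos c) :
    ((cos b + cos c) / (1 + cos a)) * (sin a) ^ 2 =
      ((cos c + cos a) / (1 + cos b)) * (sin b) ^ 2 +
      ((cos a + cos b) / (1 + cos c)) * (sin c) ^ 2 := by
  rw [div_one_add_cos_mul_sin_sq _ (one_add_cos_pos_of_mem_Ioo ha).ne',
    div_one_add_cos_mul_sin_sq _ (one_add_cos_pos_of_mem_Ioo hb).ne',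
    div_one_add_cos_mul_sin_sq _ (one_add_cos_pos_of_mem_Ioo hc).ne', hA]
  ring

theorem spherical_three_square_theorem
    (a b c B C : ℝ)
    (ha : a ∈ Set.Ioo 0 π) (hb : b ∈ Set.Ioo 0 π) (hc : c ∈ Set.Ioo 0 π)
    (hA : cos a = cos b * cos c)
    (hB : cos b = cos c * cos a + sin c * sin a * cos B)
    (hC : cos c = cos a * cos b + sin a * sin b * cos C) :
    ((cos b + cos c) / (1 + cos a)) * (sin a) ^ 2 =
      ((cos c + cos a) / (1 + cos b)) * (sin b) ^ 2 +
      ((cos a + cos b) / (1 + cos c)) * (sin c) ^ 2 :=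
  spherical_three_square_theorem_general a b c ha hb hc hA
end

section
/- For a right hyperbolic triangle with hypotenuse a (i.e. cos A = 0, so cosh a = cosh b * cosh c), the three-square identity holds: ((cosh b + cosh c)/(1 + cosh a)) * (sinh a)^2 = ((cosh c + cosh a)/(1 + cosh b)) * (sinh b)^2 + ((cosh a + cosh b)/(1 + cosh c)) * (sinh c)^2. -/
/-! Since `sinh² t = (cosh t - 1)(cosh t + 1)`, each summand `(p / (1 + cosh t)) sinh² t` is just
`p (cosh t - 1)`. Writing `x = cosh b`, `y = cosh c` and `cosh a = x y`, the identity becomes the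
polynomial identity `(x + y)(x y - 1) = y (x² - 1) + x (y² - 1)`. -/

open Real

theorem div_one_add_cosh_mul_sinh_sq (p t : ℝ) :
    p / (1 + cosh t) * sinh t ^ 2 = p * (cosh t - 1) := by
  have hpos : 1 + cosh t ≠ 0 := by positivity
  rw [sinh_sq]
  field_simp
  ring

theorem hyperbolic_three_square_theorem_general
    (a b c : ℝ)
    (hA : cosh a = cosh b * cosh c) :
    ((cosh b + cosh c) / (1 + cosh a)) * (sinh a) ^ 2 =
      ((cosh c + cosh a) / (1 + cosh b)) * (sinh b) ^ 2 +
      ((cosh a + cosh b) / (1 + cosh c)) * (sinh c) ^ 2 := by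
  simp only [div_one_add_cosh_mul_sinh_sq]
  rw [hA]
  ring

theorem hyperbolic_three_square_theorem
    (a b c B C : ℝ)
    (ha : 0 < a) (hb : 0 < b) (hc : 0 < c)
    (hA : cosh a = cosh b * cosh c)
    (hB : cosh b = cosh c * cosh a - sinh c * sinh a * cos B)
    (hC : cosh c = cosh a * cosh b - sinh a * sinh b * cos C) :
    ((cosh b + cosh c) / (1 + cosh a)) * (sinh a) ^ 2 =
      ((cosh c + cosh a) / (1 + cosh b)) * (sinh b) ^ 2 +
      ((cosh a + cosh b) / (1 + cosh c)) * (sinh c) ^ 2 :=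
  hyperbolic_three_square_theorem_general a b c hA
end
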